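/- arXiv:1912.11982 — 2 statements merged into one kernel-verified Lean document; each statement's English description precedes it below -/
import Mathlib

section
/- Let C be a finite set of shapelets and D ⊆ C. For each shapelet s ∈ D, replace s by an arbitrary n_s-cut set of s, obtaining F = (C \ D) ∪ E where E is the union of all the cut sets. For any time series x, the feature vector obtained by taking Fixed Distances from x to each element of C has the same Euclidean norm as the feature vector obtained by taking Fixed Distances from x to each element of F. -/
open Finset

/-- A shapelet: a contiguous piece of a source time series, recorded by its starting
position `start`, its length `len`, and its values `vals p` at absolute positions
`p ∈ [start, start + len)`. -/
structure Shapelet where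
  start : ℕ
  len : ℕ
  vals : ℕ → ℝ

noncomputable instance : DecidableEq Shapelet := Classical.decEq _

/-- Fixed Distance from a time series `x` to a shapelet `S`: the Euclidean distance
between `S` and the subsequence of `x` aligned at the starting position of `S`. -/
noncomputable def fixedDist (x : ℕ → ℝ) (S : Shapelet) : ℝ :=
  Real.sqrt (∑ p ∈ Finset.Ico S.start (S.start + S.len), (x p - S.vals p) ^ 2)

/-- `P : Fin n → Shapelet` is an `n`-cut set of `S`: the pieces are consecutive,
they start where `S` starts, end where `S` ends, and carry the same values as `S`. -/
def IsCutSet (S : Shapelet) (n : ℕ) (P : Fin n → Shapelet) : Prop :=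
  (∃ h : 0 < n,
      (P ⟨0, h⟩).start = S.start ∧
      (P ⟨n - 1, Nat.sub_lt h one_pos⟩).start + (P ⟨n - 1, Nat.sub_lt h one_pos⟩).len
        = S.start + S.len) ∧
  (∀ j : Fin n, ∀ hj : j.val + 1 < n,
      (P j).start + (P j).len = (P ⟨j.val + 1, hj⟩).start) ∧
  (∀ j : Fin n, ∀ p ∈ Finset.Ico (P j).start ((P j).start + (P j).len),
      (P j).vals p = S.vals p)

lemma chain_le (b : ℕ → ℕ) : ∀ n, (∀ i < n, b i ≤ b (i+1)) → b 0 ≤ b n := by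
  intro n
  induction n with
  | zero => intro _; exact le_refl _
  | succ n ih =>
    intro h
    exact le_trans (ih fun i hi => h i (by omega)) (h n (by omega))

lemma sum_Ico_chain (f : ℕ → ℝ) : ∀ (n : ℕ) (b : ℕ → ℕ),
    (∀ i < n, b i ≤ b (i+1)) →
    ∑ j ∈ Finset.range n, ∑ p ∈ Finset.Ico (b j) (b (j+1)), f p
      = ∑ p ∈ Finset.Ico (b 0) (b n), f p := by
  intro n
  induction n with
  | zero => simp
  | succ n ih =>
    intro b hb
    rw [Finset.sum_range_succ, ih b (fun i hi => hb i (by omega)),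
      Finset.sum_Ico_consecutive f (chain_le b n (fun i hi => hb i (by omega)))
        (hb n (by omega))]

lemma cut_sum (x : ℕ → ℝ) (S : Shapelet) (n : ℕ) (P : Fin n → Shapelet)
    (h : IsCutSet S n P) :
    ∑ j : Fin n, fixedDist x (P j) ^ 2 = fixedDist x S ^ 2 := by
  obtain ⟨⟨hn, h0, hlast⟩, hcons, hvals⟩ := h
  have sq : ∀ T : Shapelet, fixedDist x T ^ 2
      = ∑ p ∈ Finset.Ico T.start (T.start + T.len), (x p - T.vals p) ^ 2 :=
    fun T => Real.sq_sqrt (Finset.sum_nonneg fun p _ => sq_nonneg _)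
  set b : ℕ → ℕ := fun j => if h : j < n then (P ⟨j, h⟩).start else S.start + S.len
    with hbdef
  have hb : ∀ i, ∀ hi : i < n, b (i+1) = (P ⟨i, hi⟩).start + (P ⟨i, hi⟩).len := by
    intro i hi
    by_cases h1 : i + 1 < n
    · simp only [hbdef, dif_pos h1]
      exact (hcons ⟨i, hi⟩ h1).symm
    · have hi' : i = n - 1 := by omega
      subst hi'
      simp only [hbdef, dif_neg h1]
      exact hlast.symm
  set Q : ℕ → ℝ := fun j => if h : j < n then fixedDist x (P ⟨j, h⟩) ^ 2 else 0
    with hQdef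
  have step1 : ∑ j : Fin n, fixedDist x (P j) ^ 2 = ∑ j ∈ Finset.range n, Q j := by
    rw [← Fin.sum_univ_eq_sum_range]
    refine Finset.sum_congr rfl fun j _ => ?_
    simp [hQdef, j.isLt]
  rw [step1, sq S]
  have step2 : ∀ j ∈ Finset.range n,
      Q j = ∑ p ∈ Finset.Ico (b j) (b (j+1)), (x p - S.vals p) ^ 2 := by
    intro j hj
    have hjn := Finset.mem_range.mp hj
    simp only [hQdef, dif_pos hjn]
    rw [sq]
    have hbj : b j = (P ⟨j, hjn⟩).start := by simp [hbdef, hjn]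
    rw [hbj, hb j hjn]
    exact Finset.sum_congr rfl fun p hp => by rw [hvals ⟨j, hjn⟩ p hp]
  rw [Finset.sum_congr rfl step2,
    sum_Ico_chain (fun p => (x p - S.vals p) ^ 2) n b
      (fun i hi => by rw [hb i hi]; simp [hbdef, hi])]
  have e0 : b 0 = S.start := by simp [hbdef, hn, h0]
  have en : b n = S.start + S.len := by simp [hbdef]
  rw [e0, en]

/-- Corollary 1 of the paper: replacing each shapelet of `D ⊆ C` by a cut set of it
(with the resulting shapelets all distinct) yields a shapelet basis
`F = (C \ D) ∪ E` such that, for any time series `x`, the shapelet-transform feature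
vector of `x` through `C` by Fixed Distance has the same Euclidean norm as the one
through `F` (the norm of a feature vector indexed by a finite set `T` is
`√(Σ_{s ∈ T} fixedDist x s ²)`). -/
theorem cut_set_transform_preserves_norm
    (C D : Finset Shapelet) (hD : D ⊆ C)
    (cutn : Shapelet → ℕ) (cutP : (s : Shapelet) → Fin (cutn s) → Shapelet)
    (hcut : ∀ s ∈ D, 1 < cutn s ∧ IsCutSet s (cutn s) (cutP s)
      ∧ Function.Injective (cutP s))
    (E : Finset Shapelet)
    (hE : E = D.biUnion fun s => Finset.image (cutP s) Finset.univ)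
    (hpieces : ∀ s ∈ D, ∀ s' ∈ D, s ≠ s' →
      Disjoint (Finset.image (cutP s) Finset.univ) (Finset.image (cutP s') Finset.univ))
    (hnew : Disjoint (C \ D) E)
    (F : Finset Shapelet) (hF : F = (C \ D) ∪ E)
    (x : ℕ → ℝ) :
    Real.sqrt (∑ s ∈ C, fixedDist x s ^ 2)
      = Real.sqrt (∑ s ∈ F, fixedDist x s ^ 2) := by
  subst hF hE
  congr 1
  rw [Finset.sum_union hnew]
  rw [Finset.sum_biUnion (fun s hs s' hs' hne => hpieces s hs s' hs' hne)]
  have hEsum : ∀ s ∈ D, ∑ t ∈ Finset.image (cutP s) Finset.univ, fixedDist x t ^ 2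
      = fixedDist x s ^ 2 := by
    intro s hs
    rw [Finset.sum_image (fun a _ b _ hab => (hcut s hs).2.2 hab)]
    exact cut_sum x s (cutn s) (cutP s) (hcut s hs).2.1
  rw [Finset.sum_congr rfl hEsum, ← Finset.sum_sdiff hD]
end

section
/- Let X, Y be independent Gaussian vectors in R^k with diagonal covariances, LS = max_{‖w‖=1} P((X−Y)·w > 0), attained at w*. Fix a coordinate j and let X', Y' be independent Gaussian vectors identical in distribution to X, Y in every coordinate except j, where |μ_j(X') − μ_j(Y')| > |μ_j(X) − μ_j(Y)| and σ²_j(X') + σ²_j(Y') = σ²_j(X) + σ²_j(Y). If w*_j ≠ 0, then LS' = max_{‖w‖=1} P((X'−Y')·w > 0) > LS. -/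
open ProbabilityTheory MeasureTheory

/-- For independent Gaussian vectors `X, Y` in `ℝ^k` with diagonal covariances,
mean difference `u = μ(X) - μ(Y)` and per-axis variance sums `d j = σ²_j(X) + σ²_j(Y)`,
the projection `(X - Y) ⬝ w` is Gaussian with mean `u ⬝ w` and variance
`Σ_j d j * w j ^ 2`; so `P((X - Y) ⬝ w > 0)` is the mass the corresponding Gaussian
assigns to `(0, ∞)`. -/
noncomputable def sepProb (k : ℕ) (u : Fin k → ℝ) (d : Fin k → NNReal)
    (w : Fin k → ℝ) : ℝ :=
  (gaussianReal (∑ j, u j * w j) (∑ j, d j * ‖w j‖₊ ^ 2) (Set.Ioi 0)).toReal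

/-- The set of unit vectors of `ℝ^k`. -/
def unitVecs (k : ℕ) : Set (Fin k → ℝ) := {w | ∑ j, w j ^ 2 = 1}

/-! Replace `w⋆ j` by `sign (u' j) * |w⋆ j|`. This keeps a unit vector with the same projected
variance `Σ d i * w i ^ 2`, while the projected mean gains at least
`(|u' j| - |u j|) * |w⋆ j| > 0`. Since `P(N(m, v) > 0)` is strictly increasing in `m` for
`v > 0`, the new separability along this direction already exceeds `LS`. -/

lemma gaussianReal_Ioi_eq (m : ℝ) (v : NNReal) (a : ℝ) :
    gaussianReal m v (Set.Ioi a) = gaussianReal 0 v (Set.Ioi (a - m)) := by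
  rw [← zero_add m, ← gaussianReal_map_add_const,
    Measure.map_apply (by fun_prop) measurableSet_Ioi, zero_add]
  congr 1
  ext x
  simp [sub_lt_iff_lt_add]

lemma gaussianReal_Ioi_lt_of_lt {v : NNReal} (hv : v ≠ 0) (a : ℝ) {m m' : ℝ} (hm : m < m') :
    gaussianReal m v (Set.Ioi a) < gaussianReal m' v (Set.Ioi a) := by
  rw [gaussianReal_Ioi_eq m, gaussianReal_Ioi_eq m']
  have hIoc : gaussianReal 0 v (Set.Ioc (a - m') (a - m)) ≠ 0 := fun h0 ↦ by
    have := gaussianReal_absolutelyContinuous' 0 hv h0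
    simp only [Real.volume_Ioc, ENNReal.ofReal_eq_zero, tsub_le_iff_right] at this
    linarith
  calc gaussianReal 0 v (Set.Ioi (a - m))
      < gaussianReal 0 v (Set.Ioi (a - m)) + gaussianReal 0 v (Set.Ioc (a - m') (a - m)) :=
        ENNReal.lt_add_right (measure_ne_top _ _) hIoc
    _ = gaussianReal 0 v (Set.Ioi (a - m')) := by
        rw [add_comm, ← measure_union Set.Ioc_disjoint_Ioi_same measurableSet_Ioi,
          Set.Ioc_union_Ioi_eq_Ioi (by linarith)]

lemma gaussianReal_Ioi_toReal_strictMono {v : NNReal} (hv : v ≠ 0) (a : ℝ) :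
    StrictMono fun m ↦ (gaussianReal m v (Set.Ioi a)).toReal := fun _ _ hm ↦
  (ENNReal.toReal_lt_toReal (measure_ne_top _ _) (measure_ne_top _ _)).mpr
    (gaussianReal_Ioi_lt_of_lt hv a hm)

lemma abs_update_apply_eq {ι : Type*} [DecidableEq ι] {w : ι → ℝ} {j : ι} {c : ℝ}
    (hc : |c| = |w j|) (i : ι) :
    |Function.update w j c i| = |w i| := by
  rcases eq_or_ne i j with rfl | hi
  · simpa using hc
  · simp [hi]

lemma sum_mul_lt_sum_mul_update {ι : Type*} [Fintype ι] [DecidableEq ι] {u u' w : ι → ℝ}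
    {j : ι} {c : ℝ}
    (hu' : ∀ i, i ≠ j → u' i = u i) (hj : u j * w j < u' j * c) :
    ∑ i, u i * w i < ∑ i, u' i * Function.update w j c i := by
  have hoff : ∀ i ∈ Finset.univ.erase j, u' i * Function.update w j c i = u i * w i :=
    fun i hi ↦ by
      have hij := Finset.ne_of_mem_erase hi
      rw [Function.update_of_ne hij, hu' i hij]
  rw [← Finset.add_sum_erase _ _ (Finset.mem_univ j),
    ← Finset.add_sum_erase _ _ (Finset.mem_univ j), Finset.sum_congr rfl hoff,
    Function.update_self]
  exact add_lt_add_left hj _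

lemma sum_mul_nnnorm_sq_ne_zero {ι : Type*} [Fintype ι] {d : ι → NNReal} {w : ι → ℝ}
    {j : ι} (hd : d j ≠ 0) (hw : w j ≠ 0) : ∑ i, d i * ‖w i‖₊ ^ 2 ≠ 0 := by
  rw [Ne, Finset.sum_eq_zero_iff]
  exact fun h ↦ by simpa [hd, hw] using h j (Finset.mem_univ j)

lemma abs_sign_eq_one {α : Type*} [Ring α] [LinearOrder α] [IsStrictOrderedRing α] {x : α}
    (hx : x ≠ 0) : |(SignType.sign x : α)| = 1 := by
  obtain h | h := hx.lt_or_gt <;> simp [sign_neg, sign_pos, h]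

lemma sepProb_le_one (k : ℕ) (u : Fin k → ℝ) (d : Fin k → NNReal) (w : Fin k → ℝ) :
    sepProb k u d w ≤ 1 :=
  ENNReal.toReal_le_of_le_ofReal zero_le_one (by simpa using prob_le_one)

lemma sepProb_lt_of_sum_mul_lt {k : ℕ} {u u' : Fin k → ℝ} {d : Fin k → NNReal}
    {w w' : Fin k → ℝ} (hv : ∑ i, d i * ‖w i‖₊ ^ 2 ≠ 0) (habs : ∀ i, |w' i| = |w i|)
    (hmean : ∑ i, u i * w i < ∑ i, u' i * w' i) :
    sepProb k u d w < sepProb k u' d w' := by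
  have hvar : ∑ i, d i * ‖w' i‖₊ ^ 2 = ∑ i, d i * ‖w i‖₊ ^ 2 := by
    simp only [← Real.nnnorm_abs (w' _), habs, Real.nnnorm_abs]
  unfold sepProb
  rw [hvar]
  exact gaussianReal_Ioi_toReal_strictMono hv 0 hmean

theorem mean_gap_increases_separability_general (k : ℕ) (u : Fin k → ℝ) (d : Fin k → NNReal)
    (hd : ∀ i, 0 < d i)
    (wstar : Fin k → ℝ) (hws : wstar ∈ unitVecs k)
    (j : Fin k) (hwj : wstar j ≠ 0)
    (u' : Fin k → ℝ) (hu' : ∀ i, i ≠ j → u' i = u i) (hgap : |u j| < |u' j|) :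
    sepProb k u d wstar < sSup ((fun w => sepProb k u' d w) '' unitVecs k) := by
  set w' := Function.update wstar j (SignType.sign (u' j) * |wstar j|)
  have hu'j : u' j ≠ 0 := abs_pos.mp ((abs_nonneg _).trans_lt hgap)
  have habs : ∀ i, |w' i| = |wstar i| :=
    abs_update_apply_eq (by simp [abs_mul, abs_sign_eq_one hu'j])
  have hw' : w' ∈ unitVecs k := by
    simpa only [unitVecs, Set.mem_ofPred_eq, ← sq_abs (w' _), habs, sq_abs] using hws
  have hj : u j * wstar j < u' j * (SignType.sign (u' j) * |wstar j|) :=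
    calc u j * wstar j ≤ |u j| * |wstar j| := by rw [← abs_mul]; exact le_abs_self _
      _ < |u' j| * |wstar j| := mul_lt_mul_of_pos_right hgap (abs_pos.mpr hwj)
      _ = u' j * (SignType.sign (u' j) * |wstar j|) := by rw [← mul_assoc, self_mul_sign]
  have hbdd : BddAbove ((fun w => sepProb k u' d w) '' unitVecs k) :=
    ⟨1, by rintro _ ⟨w, -, rfl⟩; exact sepProb_le_one k u' d w⟩
  calc sepProb k u d wstar < sepProb k u' d w' :=
        sepProb_lt_of_sum_mul_lt (sum_mul_nnnorm_sq_ne_zero (hd j).ne' hwj) habs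
          (sum_mul_lt_sum_mul_update hu' hj)
    _ ≤ sSup ((fun w => sepProb k u' d w) '' unitVecs k) :=
        le_csSup hbdd ⟨w', hw', rfl⟩

/-- Positive correlation of the per-axis mean gap with linear separability
(half of Proposition 2): if `w⋆` attains the optimal linear separability
`LS = sepProb k u d w⋆` with `w⋆ j ≠ 0`, and the classes are changed only in
coordinate `j` so that the mean gap strictly increases (`|u' j| > |u j|`) while the
per-axis variance sums are unchanged, then the new optimal linear separability
`LS' = sup_{‖w‖=1} sepProb k u' d w` is strictly larger than `LS`. -/
theorem mean_gap_increases_separability (k : ℕ) (u : Fin k → ℝ) (d : Fin k → NNReal)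
    (hd : ∀ i, 0 < d i)
    (wstar : Fin k → ℝ) (hws : wstar ∈ unitVecs k)
    (hmax : ∀ w ∈ unitVecs k, sepProb k u d w ≤ sepProb k u d wstar)
    (j : Fin k) (hwj : wstar j ≠ 0)
    (u' : Fin k → ℝ) (hu' : ∀ i, i ≠ j → u' i = u i) (hgap : |u j| < |u' j|) :
    sepProb k u d wstar < sSup ((fun w => sepProb k u' d w) '' unitVecs k) :=
  mean_gap_increases_separability_general k u d hd wstar hws j hwj u' hu' hgap
end
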